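/- Let l₁, l₂, r > 0 and let Λ = {(m·l₁, n·l₂) : m, n ∈ ℤ} be the rectangular lattice in ℝ². Suppose S is a finite set of points of ℝ² that is r-separated modulo Λ, i.e. for all p, q ∈ S and all v ∈ Λ with (p, v) ≠ (q, 0) one has ‖p + v − q‖ ≥ r. Then card S ≤ (4 / (π r²)) · l₁ · l₂. -/

import Mathlib

open Metric MeasureTheory
open scoped ENNReal

/-- The lattice vector `(m·l₁, k·l₂)` in `ℝ²`. -/
noncomputable def lvec (l₁ l₂ : ℝ) (m k : ℤ) : EuclideanSpace ℝ (Fin 2) :=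
  ((m : ℝ) * l₁) • EuclideanSpace.single 0 1 + ((k : ℝ) * l₂) • EuclideanSpace.single 1 1

lemma lvec_apply0 (l₁ l₂ : ℝ) (m k : ℤ) : lvec l₁ l₂ m k 0 = (m : ℝ) * l₁ := by
  simp [lvec, EuclideanSpace.single_apply]

lemma lvec_apply1 (l₁ l₂ : ℝ) (m k : ℤ) : lvec l₁ l₂ m k 1 = (k : ℝ) * l₂ := by
  simp [lvec, EuclideanSpace.single_apply]

lemma abs_coord_le (x : EuclideanSpace ℝ (Fin 2)) (i : Fin 2) : |x i| ≤ ‖x‖ := by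
  rw [EuclideanSpace.norm_eq, ← Real.sqrt_sq_eq_abs]
  apply Real.sqrt_le_sqrt
  calc x i ^ 2 ≤ ∑ j, ‖x j‖ ^ 2 := by
        refine (Finset.single_le_sum (f := fun j => ‖x j‖ ^ 2)
          (fun j _ => by positivity) (Finset.mem_univ i)).trans_eq' ?_
        simp [sq_abs]
  _ = _ := rfl

/-- The canonical representative of `p` modulo the lattice, translated by `(i·l₁, j·l₂)`. -/
noncomputable def gpt (l₁ l₂ : ℝ) (p : EuclideanSpace ℝ (Fin 2)) (i j : ℤ) :
    EuclideanSpace ℝ (Fin 2) :=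
  p + lvec l₁ l₂ (i - ⌊p 0 / l₁⌋) (j - ⌊p 1 / l₂⌋)

lemma gpt_sub (l₁ l₂ : ℝ) (p q : EuclideanSpace ℝ (Fin 2)) (i j i' j' : ℤ) :
    gpt l₁ l₂ p i j - gpt l₁ l₂ q i' j' =
      p + lvec l₁ l₂ ((i - ⌊p 0 / l₁⌋) - (i' - ⌊q 0 / l₁⌋))
        ((j - ⌊p 1 / l₂⌋) - (j' - ⌊q 1 / l₂⌋)) - q := by
  unfold gpt lvec
  push_cast
  module

lemma gpt_apply0 (l₁ l₂ : ℝ) (hl₁ : l₁ ≠ 0) (p : EuclideanSpace ℝ (Fin 2)) (i j : ℤ) :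
    gpt l₁ l₂ p i j 0 = l₁ * (Int.fract (p 0 / l₁) + i) := by
  simp only [gpt, lvec, PiLp.add_apply, PiLp.smul_apply, EuclideanSpace.single_apply,
    smul_eq_mul]
  norm_num
  rw [← Int.self_sub_floor]
  have := div_mul_cancel₀ (p 0) hl₁
  linear_combination -this

lemma gpt_apply1 (l₁ l₂ : ℝ) (hl₂ : l₂ ≠ 0) (p : EuclideanSpace ℝ (Fin 2)) (i j : ℤ) :
    gpt l₁ l₂ p i j 1 = l₂ * (Int.fract (p 1 / l₂) + j) := by
  simp only [gpt, lvec, PiLp.add_apply, PiLp.smul_apply, EuclideanSpace.single_apply,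
    smul_eq_mul]
  norm_num
  rw [← Int.self_sub_floor]
  have := div_mul_cancel₀ (p 1) hl₂
  linear_combination -this

/-- Volume of the two-dimensional Euclidean ball. -/
lemma vol_ball_two (x : EuclideanSpace ℝ (Fin 2)) (s : ℝ) (hs : 0 ≤ s) :
    MeasureTheory.volume (ball x s) = ENNReal.ofReal (Real.pi * s ^ 2) := by
  rw [EuclideanSpace.volume_ball]
  simp only [Fintype.card_fin]
  rw [show ((2 : ℕ) : ℝ) / 2 + 1 = 2 by norm_num, Real.Gamma_two,
    Real.sq_sqrt Real.pi_pos.le]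
  rw [← ENNReal.ofReal_pow hs, ← ENNReal.ofReal_mul (by positivity)]
  ring_nf

/-- Translates of points of `S` are `r`-separated. -/
lemma sep_gpt (l₁ l₂ r : ℝ) (hl₁ : 0 < l₁) (hl₂ : 0 < l₂)
    (Λ : Set (EuclideanSpace ℝ (Fin 2)))
    (hΛ : Λ = {x : EuclideanSpace ℝ (Fin 2) |
      ∃ m k : ℤ, x 0 = (m : ℝ) * l₁ ∧ x 1 = (k : ℝ) * l₂})
    (S : Finset (EuclideanSpace ℝ (Fin 2)))
    (hsep : ∀ p ∈ S, ∀ q ∈ S, ∀ v ∈ Λ,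
      (p, v) ≠ (q, (0 : EuclideanSpace ℝ (Fin 2))) → r ≤ ‖p + v - q‖)
    (p : EuclideanSpace ℝ (Fin 2)) (hp : p ∈ S) (q : EuclideanSpace ℝ (Fin 2)) (hq : q ∈ S)
    (i j i' j' : ℤ) (hne : (p, i, j) ≠ (q, i', j')) :
    r ≤ ‖gpt l₁ l₂ p i j - gpt l₁ l₂ q i' j'‖ := by
  rw [gpt_sub]
  set a : ℤ := (i - ⌊p 0 / l₁⌋) - (i' - ⌊q 0 / l₁⌋) with ha
  set b : ℤ := (j - ⌊p 1 / l₂⌋) - (j' - ⌊q 1 / l₂⌋) with hb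
  refine hsep p hp q hq _ ?_ ?_
  · rw [hΛ]
    exact ⟨a, b, lvec_apply0 _ _ _ _, lvec_apply1 _ _ _ _⟩
  · intro h
    rw [Prod.ext_iff] at h
    obtain ⟨hpq, h0⟩ := h
    dsimp only at hpq h0
    apply hne
    have hfl0 : ⌊p 0 / l₁⌋ = ⌊q 0 / l₁⌋ := by rw [hpq]
    have hfl1 : ⌊p 1 / l₂⌋ = ⌊q 1 / l₂⌋ := by rw [hpq]
    have h0' : (a : ℝ) * l₁ = 0 := by
      rw [← lvec_apply0 l₁ l₂ a b, h0]; rfl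
    have h1' : (b : ℝ) * l₂ = 0 := by
      rw [← lvec_apply1 l₁ l₂ a b, h0]; rfl
    have hA : a = 0 := by
      rcases mul_eq_zero.1 h0' with h | h
      · exact_mod_cast h
      · exact absurd h hl₁.ne'
    have hB : b = 0 := by
      rcases mul_eq_zero.1 h1' with h | h
      · exact_mod_cast h
      · exact absurd h hl₂.ne'
    have hi : i = i' := by rw [ha, hfl0] at hA; linarith
    have hj : j = j' := by rw [hb, hfl1] at hB; linarith
    rw [hpq, hi, hj]

/-- The counting bound obtained by packing `N² · card S` disjoint disks of radius `r/2`
into a box of size `(N·l₁ + r) × (N·l₂ + r)`. -/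
lemma count_le (l₁ l₂ r : ℝ) (hl₁ : 0 < l₁) (hl₂ : 0 < l₂) (hr : 0 < r)
    (S : Finset (EuclideanSpace ℝ (Fin 2)))
    (hg : ∀ p ∈ S, ∀ q ∈ S, ∀ i j i' j' : ℤ, (p, i, j) ≠ (q, i', j') →
      r ≤ ‖gpt l₁ l₂ p i j - gpt l₁ l₂ q i' j'‖)
    (N : ℕ) (hN : 0 < N) :
    (S.card : ℝ) * N * N * (Real.pi * (r / 2) ^ 2) ≤ (N * l₁ + r) * (N * l₂ + r) := by
  classical
  set f : EuclideanSpace ℝ (Fin 2) × ℕ × ℕ → EuclideanSpace ℝ (Fin 2) :=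
    fun x => gpt l₁ l₂ x.1 (x.2.1 : ℤ) (x.2.2 : ℤ) with hf
  set A : Finset (EuclideanSpace ℝ (Fin 2) × ℕ × ℕ) :=
    S ×ˢ (Finset.range N ×ˢ Finset.range N) with hA
  have memA : ∀ x ∈ A, x.1 ∈ S ∧ x.2.1 < N ∧ x.2.2 < N := by
    intro x hx
    simp only [hA, Finset.mem_product, Finset.mem_range] at hx
    exact ⟨hx.1, hx.2.1, hx.2.2⟩
  have hsep' : ∀ x ∈ A, ∀ y ∈ A, x ≠ y → r ≤ ‖f x - f y‖ := by
    intro x hx y hy hxy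
    refine hg x.1 (memA x hx).1 y.1 (memA y hy).1 _ _ _ _ ?_
    intro h
    rw [Prod.ext_iff, Prod.ext_iff] at h
    obtain ⟨h1, h2, h3⟩ := h
    dsimp only at h1 h2 h3
    apply hxy
    have e2 : x.2.1 = y.2.1 := by exact_mod_cast h2
    have e3 : x.2.2 = y.2.2 := by exact_mod_cast h3
    exact Prod.ext h1 (Prod.ext e2 e3)
  have hinj : Set.InjOn f A := by
    intro x hx y hy hxy
    by_contra hxy'
    have := hsep' x hx y hy hxy'
    rw [hxy, sub_self, norm_zero] at this
    linarith
  set T : Finset (EuclideanSpace ℝ (Fin 2)) := A.image f with hT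
  have hTcard : T.card = S.card * N * N := by
    rw [hT, Finset.card_image_of_injOn hinj, hA]
    simp [Finset.card_product, mul_assoc]
  -- pairwise disjoint balls
  have hdisj : (↑T : Set (EuclideanSpace ℝ (Fin 2))).PairwiseDisjoint
      (fun t => ball t (r / 2)) := by
    intro t ht t' ht' htne
    rw [Finset.mem_coe, hT, Finset.mem_image] at ht ht'
    obtain ⟨x, hx, rfl⟩ := ht
    obtain ⟨y, hy, rfl⟩ := ht'
    have hxy : x ≠ y := fun h => htne (by rw [h])
    have hd : r ≤ dist (f x) (f y) := by
      rw [dist_eq_norm]; exact hsep' x hx y hy hxy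
    exact ball_disjoint_ball (by linarith)
  -- the box
  set lo : Fin 2 → ℝ := ![-(r / 2), -(r / 2)] with hlo
  set hi : Fin 2 → ℝ := ![N * l₁ + r / 2, N * l₂ + r / 2] with hhi
  set Box : Set (EuclideanSpace ℝ (Fin 2)) :=
    (MeasurableEquiv.toLp 2 (Fin 2 → ℝ)).symm ⁻¹'
      (Set.univ.pi fun i => Set.Icc (lo i) (hi i)) with hBox
  have hsub : ∀ t ∈ T, ball t (r / 2) ⊆ Box := by
    intro t ht z hz
    rw [hT, Finset.mem_image] at ht
    obtain ⟨x, hx, rfl⟩ := ht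
    obtain ⟨hx1, hx2, hx3⟩ := memA x hx
    have hzt : ∀ i : Fin 2, |z i - f x i| ≤ r / 2 := by
      intro i
      have h1 : |(z - f x) i| ≤ ‖z - f x‖ := abs_coord_le _ i
      have h2 : (z - f x) i = z i - f x i := by simp
      rw [h2] at h1
      refine h1.trans ?_
      rw [← dist_eq_norm]
      exact (mem_ball.mp hz).le
    have hfx0 : f x 0 = l₁ * (Int.fract (x.1 0 / l₁) + (x.2.1 : ℤ)) :=
      gpt_apply0 l₁ l₂ hl₁.ne' x.1 _ _
    have hfx1 : f x 1 = l₂ * (Int.fract (x.1 1 / l₂) + (x.2.2 : ℤ)) :=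
      gpt_apply1 l₁ l₂ hl₂.ne' x.1 _ _
    have hb0 : 0 ≤ f x 0 ∧ f x 0 ≤ N * l₁ := by
      rw [hfx0]
      constructor
      · have := Int.fract_nonneg (x.1 0 / l₁)
        positivity
      · have h1 := Int.fract_lt_one (x.1 0 / l₁)
        have h2 : (x.2.1 : ℝ) ≤ (N : ℝ) - 1 := by
          have : (x.2.1 : ℝ) + 1 ≤ N := by exact_mod_cast hx2
          linarith
        push_cast
        nlinarith [Int.fract_nonneg (x.1 0 / l₁)]
    have hb1 : 0 ≤ f x 1 ∧ f x 1 ≤ N * l₂ := by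
      rw [hfx1]
      constructor
      · have := Int.fract_nonneg (x.1 1 / l₂)
        positivity
      · have h1 := Int.fract_lt_one (x.1 1 / l₂)
        have h2 : (x.2.2 : ℝ) ≤ (N : ℝ) - 1 := by
          have : (x.2.2 : ℝ) + 1 ≤ N := by exact_mod_cast hx3
          linarith
        push_cast
        nlinarith [Int.fract_nonneg (x.1 1 / l₂)]
    have habs0 := abs_le.mp (hzt 0)
    have habs1 := abs_le.mp (hzt 1)
    intro i _
    fin_cases i
    · exact ⟨by show -(r/2) ≤ z 0; linarith [hb0.1, habs0.1],
        by show z 0 ≤ N * l₁ + r / 2; linarith [hb0.2, habs0.2]⟩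
    · exact ⟨by show -(r/2) ≤ z 1; linarith [hb1.1, habs1.1],
        by show z 1 ≤ N * l₂ + r / 2; linarith [hb1.2, habs1.2]⟩
  -- volume computation
  have hBoxvol : volume Box = ENNReal.ofReal (N * l₁ + r) * ENNReal.ofReal (N * l₂ + r) := by
    rw [hBox, MeasurePreserving.measure_preimage
      (EuclideanSpace.volume_preserving_symm_measurableEquiv_toLp (Fin 2))
      (MeasurableSet.univ_pi fun i => measurableSet_Icc).nullMeasurableSet]
    rw [volume_pi_pi]
    rw [Fin.prod_univ_two]
    simp only [hlo, hhi, Matrix.cons_val_zero, Matrix.cons_val_one, Matrix.head_cons,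
      Real.volume_Icc]
    congr 1 <;> ring_nf
  have hchain : (T.card : ℝ≥0∞) * ENNReal.ofReal (Real.pi * (r / 2) ^ 2) ≤ volume Box := by
    calc (T.card : ℝ≥0∞) * ENNReal.ofReal (Real.pi * (r / 2) ^ 2)
        = ∑ t ∈ T, volume (ball t (r / 2)) := by
          rw [Finset.sum_congr rfl fun t _ => vol_ball_two t (r / 2) (by positivity)]
          rw [Finset.sum_const, nsmul_eq_mul]
      _ = volume (⋃ t ∈ T, ball t (r / 2)) :=
          (measure_biUnion_finset hdisj fun _ _ => measurableSet_ball).symm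
      _ ≤ volume Box := measure_mono (Set.iUnion₂_subset hsub)
  rw [hBoxvol] at hchain
  rw [← ENNReal.ofReal_natCast, ← ENNReal.ofReal_mul (by positivity),
    ← ENNReal.ofReal_mul (by positivity)] at hchain
  have hreal := (ENNReal.ofReal_le_ofReal_iff (by positivity)).mp hchain
  rw [hTcard] at hreal
  push_cast at hreal
  nlinarith [hreal]

/-- Quantitative core of Thurston's inequality: if `S ⊆ ℝ²` is a finite set that is
`r`-separated modulo the rectangular lattice `l₁ℤ × l₂ℤ`, then
`card S ≤ (4 / (π r²)) · l₁ · l₂`. -/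
theorem card_separated_mod_rectangular_lattice_le
    (l₁ l₂ r : ℝ) (hl₁ : 0 < l₁) (hl₂ : 0 < l₂) (hr : 0 < r)
    (Λ : Set (EuclideanSpace ℝ (Fin 2)))
    (hΛ : Λ = {x : EuclideanSpace ℝ (Fin 2) |
      ∃ m k : ℤ, x 0 = (m : ℝ) * l₁ ∧ x 1 = (k : ℝ) * l₂})
    (S : Finset (EuclideanSpace ℝ (Fin 2)))
    (hsep : ∀ p ∈ S, ∀ q ∈ S, ∀ v ∈ Λ,
      (p, v) ≠ (q, (0 : EuclideanSpace ℝ (Fin 2))) → r ≤ ‖p + v - q‖) :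
    (S.card : ℝ) ≤ 4 / (Real.pi * r ^ 2) * l₁ * l₂ := by
  have hg : ∀ p ∈ S, ∀ q ∈ S, ∀ i j i' j' : ℤ, (p, i, j) ≠ (q, i', j') →
      r ≤ ‖gpt l₁ l₂ p i j - gpt l₁ l₂ q i' j'‖ :=
    fun p hp q hq i j i' j' hne => sep_gpt l₁ l₂ r hl₁ hl₂ Λ hΛ S hsep p hp q hq i j i' j' hne
  have hπ := Real.pi_pos
  have hc : (0:ℝ) < Real.pi * (r / 2) ^ 2 := by positivity
  have main : (S.card : ℝ) * (Real.pi * (r / 2) ^ 2) ≤ l₁ * l₂ := by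
    refine le_of_forall_pos_le_add fun ε hε => ?_
    obtain ⟨N, hN⟩ := exists_nat_gt ((l₁ * r + l₂ * r + r ^ 2) / ε)
    set M : ℕ := max N 1 with hM
    have hMpos : 0 < M := lt_of_lt_of_le one_pos (le_max_right N 1)
    have hM1 : (1:ℝ) ≤ (M:ℝ) := by exact_mod_cast hMpos
    have hk := count_le l₁ l₂ r hl₁ hl₂ hr S hg M hMpos
    have hNM : (l₁ * r + l₂ * r + r ^ 2) / ε < (M:ℝ) :=
      hN.trans_le (by exact_mod_cast le_max_left N 1)
    have h2 : l₁ * r + l₂ * r + r ^ 2 ≤ ε * M := by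
      rw [div_lt_iff₀ hε] at hNM; linarith
    have hM2 : (0:ℝ) < (M:ℝ) ^ 2 := by positivity
    nlinarith [hk, hM1, hM2, hε.le, hc]
  calc (S.card : ℝ) = (S.card : ℝ) * (Real.pi * (r / 2) ^ 2) / (Real.pi * (r / 2) ^ 2) := by
        field_simp
    _ ≤ (l₁ * l₂) / (Real.pi * (r / 2) ^ 2) :=
        div_le_div_of_nonneg_right main hc.le
    _ = 4 / (Real.pi * r ^ 2) * l₁ * l₂ := by
        field_simp
        ring
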